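/- arXiv:2105.11145 — 5 statements merged into one kernel-verified Lean document; each statement's English description precedes it below -/
import Mathlib

section
/- Let E be a real normed vector space and f : E → ℝ three times continuously (Fréchet) differentiable. Then for all x, e ∈ E: f(x + e) − f(x) = (1/2)(f′(x)(e) + f′(x + e)(e)) + (1/2) ∫₀¹ f‴(x + s·e)(e, e, e) · s(s−1) ds, where f′ and f‴ denote the first and third Fréchet derivatives. -/
open intervalIntegral MeasureTheory

/-- Key derivative lemma: the directional iterated derivative along a segment. -/
lemma key_hasDerivAt {E : Type*} [NormedAddCommGroup E] [NormedSpace ℝ E]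
    (f : E → ℝ) {n : ℕ} (hf : ContDiff ℝ ((n : ℕ∞) + 1) f) (x e : E) (s : ℝ) :
    HasDerivAt (fun t : ℝ => iteratedFDeriv ℝ n f (x + t • e) (fun _ => e))
      (iteratedFDeriv ℝ (n + 1) f (x + s • e) (fun _ => e)) s := by
  have hline : HasDerivAt (fun t : ℝ => x + t • e) e s := by
    simpa using ((hasDerivAt_id s).smul_const e).const_add x
  set F := iteratedFDeriv ℝ n f with hF
  have hFC : ContDiff ℝ 1 F := hf.iteratedFDeriv_right (by
    rw [add_comm]; norm_cast)
  have hFd : HasFDerivAt F (fderiv ℝ F (x + s • e)) (x + s • e) :=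
    (hFC.differentiable one_ne_zero (x + s • e)).hasFDerivAt
  have hcomp : HasDerivAt (fun t : ℝ => F (x + t • e))
      (fderiv ℝ F (x + s • e) e) s := hFd.comp_hasDerivAt s hline
  have h := ((ContinuousMultilinearMap.apply ℝ (fun _ : Fin n => E) ℝ
      (fun _ => e)).hasFDerivAt.comp_hasDerivAt s hcomp)
  convert h using 1 <;> rfl

/-- 1D trapezoidal identity with exact remainder. -/
lemma trap1d (g g1 g2 g3 : ℝ → ℝ)
    (h1 : ∀ s, HasDerivAt g (g1 s) s)
    (h2 : ∀ s, HasDerivAt g1 (g2 s) s)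
    (h3 : ∀ s, HasDerivAt g2 (g3 s) s)
    (hc : Continuous g3) :
    g 1 - g 0 = (1 / 2) * (g1 0 + g1 1)
      + (1 / 2) * ∫ s in (0:ℝ)..1, g3 s * (s * (s - 1)) := by
  have cg1 : Continuous g1 :=
    continuous_iff_continuousAt.mpr fun t => (h2 t).continuousAt
  have cg2 : Continuous g2 :=
    continuous_iff_continuousAt.mpr fun t => (h3 t).continuousAt
  have ig1 : IntervalIntegrable g1 volume 0 1 := cg1.intervalIntegrable 0 1
  have ig2 : IntervalIntegrable g2 volume 0 1 := cg2.intervalIntegrable 0 1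
  -- FTC for g1
  have ftc : ∫ s in (0:ℝ)..1, g1 s = g 1 - g 0 :=
    integral_eq_sub_of_hasDerivAt (fun t _ => h1 t) ig1
  -- first integration by parts: u = s(s-1), v = g2
  have hu : ∀ s ∈ Set.uIcc (0:ℝ) 1, HasDerivAt (fun s : ℝ => s * (s - 1))
      (2 * s - 1) s := by
    intro s _
    have := ((hasDerivAt_id s).mul ((hasDerivAt_id s).sub_const 1))
    simpa [Pi.mul_def, mul_comm, two_mul] using this.congr_deriv (by simp only [id_eq]; ring)
  have hu' : IntervalIntegrable (fun s : ℝ => 2 * s - 1) volume 0 1 :=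
    (by continuity : Continuous fun s : ℝ => 2 * s - 1).intervalIntegrable 0 1
  have ig3 : IntervalIntegrable g3 volume 0 1 := hc.intervalIntegrable 0 1
  have parts1 : ∫ s in (0:ℝ)..1, (s * (s - 1)) * g3 s =
      (1 * (1 - 1)) * g2 1 - (0 * (0 - 1)) * g2 0
        - ∫ s in (0:ℝ)..1, (2 * s - 1) * g2 s :=
    integral_mul_deriv_eq_deriv_mul hu (fun s _ => h3 s) hu' ig3
  have hu2 : ∀ s ∈ Set.uIcc (0:ℝ) 1, HasDerivAt (fun s : ℝ => 2 * s - 1)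
      (2 : ℝ) s := by
    intro s _
    simpa using ((hasDerivAt_id s).const_mul 2).sub_const 1
  have parts2 : ∫ s in (0:ℝ)..1, (2 * s - 1) * g2 s =
      (2 * 1 - 1) * g1 1 - (2 * 0 - 1) * g1 0
        - ∫ s in (0:ℝ)..1, (2 : ℝ) * g1 s :=
    integral_mul_deriv_eq_deriv_mul hu2 (fun s _ => h2 s)
      ((continuous_const : Continuous fun _ : ℝ => (2:ℝ)).intervalIntegrable 0 1) ig2
  have h2int : ∫ s in (0:ℝ)..1, (2 : ℝ) * g1 s = 2 * (g 1 - g 0) := by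
    rw [intervalIntegral.integral_const_mul, ftc]
  have hcomm : ∫ s in (0:ℝ)..1, g3 s * (s * (s - 1)) =
      ∫ s in (0:ℝ)..1, (s * (s - 1)) * g3 s := by
    simp [mul_comm]
  rw [hcomm, parts1, parts2, h2int]
  ring

/-- Trapezoidal identity along a segment in a real normed space: for
`f : E → ℝ` three times continuously Fréchet differentiable,
`f(x+e) − f(x) = (1/2)(f′(x)(e) + f′(x+e)(e))
  + (1/2) ∫₀¹ f‴(x+s·e)(e,e,e) · s(s−1) ds`. -/
theorem trapezoidal_identity_segment
    {E : Type*} [NormedAddCommGroup E] [NormedSpace ℝ E]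
    (f : E → ℝ) (hf : ContDiff ℝ 3 f) (x e : E) :
    f (x + e) - f x =
      (1 / 2) * (fderiv ℝ f x e + fderiv ℝ f (x + e) e) +
      (1 / 2) * ∫ s in (0 : ℝ)..1,
        iteratedFDeriv ℝ 3 f (x + s • e) (fun _ => e) * (s * (s - 1)) := by
  set g : ℝ → ℝ := fun t => iteratedFDeriv ℝ 0 f (x + t • e) (fun _ => e) with hg
  set g1 : ℝ → ℝ := fun t => iteratedFDeriv ℝ 1 f (x + t • e) (fun _ => e) with hg1
  set g2 : ℝ → ℝ := fun t => iteratedFDeriv ℝ 2 f (x + t • e) (fun _ => e) with hg2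
  set g3 : ℝ → ℝ := fun t => iteratedFDeriv ℝ 3 f (x + t • e) (fun _ => e) with hg3
  have h1 : ∀ s, HasDerivAt g (g1 s) s := fun s =>
    key_hasDerivAt f (n := 0) (by exact_mod_cast hf.of_le (by norm_num)) x e s
  have h2 : ∀ s, HasDerivAt g1 (g2 s) s := fun s =>
    key_hasDerivAt f (n := 1) (by exact_mod_cast hf.of_le (by norm_num)) x e s
  have h3 : ∀ s, HasDerivAt g2 (g3 s) s := fun s =>
    key_hasDerivAt f (n := 2) (by exact_mod_cast hf) x e s
  have hc : Continuous g3 := by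
    have h0 : ContDiff ℝ 0 (iteratedFDeriv ℝ 3 f) :=
      hf.iteratedFDeriv_right (by norm_num)
    have : Continuous (iteratedFDeriv ℝ 3 f) := h0.continuous
    exact ((ContinuousMultilinearMap.apply ℝ (fun _ : Fin 3 => E) ℝ
      (fun _ => e)).continuous).comp (this.comp (by continuity))
  have key := trap1d g g1 g2 g3 h1 h2 h3 hc
  have hg0 : ∀ t : ℝ, g t = f (x + t • e) := fun t => by
    simp [hg, iteratedFDeriv_zero_apply]
  have hg10 : ∀ t : ℝ, g1 t = fderiv ℝ f (x + t • e) e := fun t => by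
    simp [hg1, iteratedFDeriv_one_apply]
  rw [hg0, hg0, hg10, hg10] at key
  simpa using key
end

section
/- Let E be a real normed vector space, f : E → ℝ three times continuously (Fréchet) differentiable, and let x̄, x_h ∈ E with e := x̄ − x_h. If f′(x̄) = 0 (x̄ is a stationary point), then f(x̄) − f(x_h) = (1/2) f′(x_h)(e) + (1/2) ∫₀¹ f‴(x_h + s·e)(e, e, e) · s(s−1) ds. -/
/-- If `x̄` is a stationary point of a three times continuously Fréchet
differentiable `f : E → ℝ` (i.e. `f′(x̄) = 0`) and `e := x̄ − x_h`, then
`f(x̄) − f(x_h) = (1/2) f′(x_h)(e) + (1/2) ∫₀¹ f‴(x_h+s·e)(e,e,e) · s(s−1) ds`. -/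
theorem stationary_point_error_identity
    {E : Type*} [NormedAddCommGroup E] [NormedSpace ℝ E]
    (f : E → ℝ) (hf : ContDiff ℝ 3 f) (xbar xh : E)
    (hstat : fderiv ℝ f xbar = 0) :
    f xbar - f xh =
      (1 / 2) * fderiv ℝ f xh (xbar - xh) +
      (1 / 2) * ∫ s in (0 : ℝ)..1,
        iteratedFDeriv ℝ 3 f (xh + s • (xbar - xh)) (fun _ => xbar - xh) *
          (s * (s - 1)) := by
  set e : E := xbar - xh with he
  set c : ℝ → E := fun s => xh + s • e with hcdef
  have hc : ∀ s : ℝ, HasDerivAt c e s := by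
    intro s
    have := ((hasDerivAt_id s).smul_const e).const_add xh
    rw [one_smul] at this
    exact this
  set d1 : E → (E →L[ℝ] ℝ) := fderiv ℝ f with hd1
  set d2 := fderiv ℝ d1 with hd2
  set d3 := fderiv ℝ d2 with hd3
  have hf1 : ContDiff ℝ 2 d1 := hf.fderiv_right (by norm_num)
  have hf2 : ContDiff ℝ 1 d2 := hf1.fderiv_right (by norm_num)
  have hf3 := ((hf2.fderiv_right (m := 0) (by norm_num)).continuous)
  set g : ℝ → ℝ := fun s => f (c s) with hgdef
  set g1 : ℝ → ℝ := fun s => d1 (c s) e with hg1def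
  set g2 : ℝ → ℝ := fun s => d2 (c s) e e with hg2def
  set g3 : ℝ → ℝ := fun s => d3 (c s) e e e with hg3def
  have hg : ∀ s, HasDerivAt g (g1 s) s := fun s =>
    ((hf.differentiable (by norm_num) (c s)).hasFDerivAt).comp_hasDerivAt s (hc s)
  have hA : ∀ s, HasDerivAt (fun t => d1 (c t)) (d2 (c s) e) s := fun s =>
    ((hf1.differentiable (by norm_num) (c s)).hasFDerivAt).comp_hasDerivAt s (hc s)
  have hg1 : ∀ s, HasDerivAt g1 (g2 s) s := by
    intro s
    simpa using (hA s).clm_apply (hasDerivAt_const s e)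
  have hB : ∀ s, HasDerivAt (fun t => d2 (c t)) (d3 (c s) e) s := fun s =>
    ((hf2.differentiable (by norm_num) (c s)).hasFDerivAt).comp_hasDerivAt s (hc s)
  have hg2 : ∀ s, HasDerivAt g2 (g3 s) s := by
    intro s
    have h1 : HasDerivAt (fun t => d2 (c t) e) (d3 (c s) e e) s := by
      simpa using (hB s).clm_apply (hasDerivAt_const s e)
    simpa using h1.clm_apply (hasDerivAt_const s e)
  -- continuity
  have hcc : Continuous c := by fun_prop
  have hg1c : Continuous g1 := by
    exact ((hf1.continuous.comp hcc).clm_apply continuous_const)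
  have hg2c : Continuous g2 := by
    exact (((hf2.continuous.comp hcc).clm_apply continuous_const).clm_apply continuous_const)
  have hg3c : Continuous g3 := by
    exact ((((hf3.comp hcc).clm_apply continuous_const).clm_apply
      continuous_const).clm_apply continuous_const)
  -- identify the iterated derivative
  have key : ∀ s : ℝ, iteratedFDeriv ℝ 3 f (c s) (fun _ => e) = g3 s := by
    intro s
    have h3 : iteratedFDeriv ℝ 3 f (c s) (fun _ => e) =
        iteratedFDeriv ℝ 2 (fun y => fderiv ℝ f y) (c s) (fun _ => e) e :=
      iteratedFDeriv_succ_apply_right (n := 2) _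
    rw [h3, iteratedFDeriv_two_apply]
  -- stationary point
  have hg11 : g1 1 = 0 := by
    have hc1 : c 1 = xbar := by simp [hcdef, he]
    show (d1 (c 1)) e = 0
    rw [hc1, hstat]; rfl
  -- FTC
  have hftc : ∫ s in (0:ℝ)..1, g1 s = g 1 - g 0 :=
    intervalIntegral.integral_eq_sub_of_hasDerivAt (fun s _ => hg s)
      (hg1c.intervalIntegrable 0 1)
  -- first integration by parts
  have hu : ∀ s : ℝ, HasDerivAt (fun t : ℝ => t * (t - 1)) (2 * s - 1) s := by
    intro s
    have h : HasDerivAt (fun t : ℝ => t * (t - 1)) (1 * (s - 1) + s * 1) s := by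
      exact (hasDerivAt_id s).mul ((hasDerivAt_id s).sub_const 1)
    convert h using 1; ring
  have ibp1 : ∫ s in (0:ℝ)..1, (s * (s - 1)) * g3 s =
      (1 * (1 - 1)) * g2 1 - (0 * (0 - 1)) * g2 0 -
        ∫ s in (0:ℝ)..1, (2 * s - 1) * g2 s :=
    intervalIntegral.integral_mul_deriv_eq_deriv_mul
      (fun s _ => hu s) (fun s _ => hg2 s)
      ((by fun_prop : Continuous fun s : ℝ => 2 * s - 1).intervalIntegrable 0 1)
      (hg3c.intervalIntegrable 0 1)
  have hu2 : ∀ s : ℝ, HasDerivAt (fun t : ℝ => 2 * t - 1) (2 : ℝ) s := by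
    intro s
    simpa using ((hasDerivAt_id s).const_mul (2:ℝ)).sub_const 1
  have ibp2 : ∫ s in (0:ℝ)..1, (2 * s - 1) * g2 s =
      (2 * 1 - 1) * g1 1 - (2 * 0 - 1) * g1 0 -
        ∫ s in (0:ℝ)..1, (2:ℝ) * g1 s :=
    intervalIntegral.integral_mul_deriv_eq_deriv_mul
      (fun s _ => hu2 s) (fun s _ => hg1 s)
      (continuous_const.intervalIntegrable 0 1)
      (hg2c.intervalIntegrable 0 1)
  have h2int : ∫ s in (0:ℝ)..1, (2:ℝ) * g1 s = 2 * (g 1 - g 0) := by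
    rw [intervalIntegral.integral_const_mul, hftc]
  have hval : ∫ s in (0:ℝ)..1, (s * (s - 1)) * g3 s = -g1 0 + 2 * (g 1 - g 0) := by
    rw [ibp1, ibp2, h2int, hg11]; ring
  have hrw : (∫ s in (0:ℝ)..1,
      iteratedFDeriv ℝ 3 f (xh + s • e) (fun _ => e) * (s * (s - 1))) =
      ∫ s in (0:ℝ)..1, (s * (s - 1)) * g3 s := by
    apply intervalIntegral.integral_congr
    intro s _
    show iteratedFDeriv ℝ 3 f (c s) (fun _ => e) * (s * (s - 1)) = (s * (s - 1)) * g3 s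
    rw [key s, mul_comm]
  have hg0 : g 0 = f xh := by simp [hgdef, hcdef]
  have hgone : g 1 = f xbar := by simp [hgdef, hcdef, he]
  have hc0 : c 0 = xh := by simp [hcdef]
  have hd1x : (d1 xh) e = g1 0 := by rw [hg1def]; simp only; rw [hc0]
  rw [hrw, hval, hd1x, ← hg0, ← hgone]
  ring
end

section
/- Let E be a real normed vector space, S ⊆ E a linear subspace, and f : E → ℝ three times continuously (Fréchet) differentiable. Let x̄, x_h ∈ E with e := x̄ − x_h. Assume f′(x̄) = 0 and the Galerkin orthogonality f′(x_h)(φ_h) = 0 for all φ_h ∈ S. Then for every y_h ∈ S: f(x̄) − f(x_h) = (1/2) f′(x_h)(x̄ − x_h − y_h) + (1/2) ∫₀¹ f‴(x_h + s·e)(e, e, e) · s(s−1) ds. -/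
/-- Stationarity plus Galerkin orthogonality: if `f′(x̄) = 0` and
`f′(x_h)(φ_h) = 0` for all `φ_h` in a subspace `S`, then for every `y_h ∈ S`,
`f(x̄) − f(x_h) = (1/2) f′(x_h)(x̄ − x_h − y_h)
  + (1/2) ∫₀¹ f‴(x_h+s·e)(e,e,e) · s(s−1) ds` with `e := x̄ − x_h`. -/
theorem galerkin_orthogonality_error_identity
    {E : Type*} [NormedAddCommGroup E] [NormedSpace ℝ E]
    (S : Submodule ℝ E) (f : E → ℝ) (hf : ContDiff ℝ 3 f) (xbar xh : E)
    (hstat : fderiv ℝ f xbar = 0)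
    (hgal : ∀ φh ∈ S, fderiv ℝ f xh φh = 0) :
    ∀ yh ∈ S,
      f xbar - f xh =
        (1 / 2) * fderiv ℝ f xh (xbar - xh - yh) +
        (1 / 2) * ∫ s in (0 : ℝ)..1,
          iteratedFDeriv ℝ 3 f (xh + s • (xbar - xh)) (fun _ => xbar - xh) *
            (s * (s - 1)) := by
  intro yh hyh
  set e : E := xbar - xh with he
  set φ : ℕ → ℝ → ℝ := fun k s => iteratedFDeriv ℝ k f (xh + s • e) (fun _ => e)
    with hφ
  have hline : ∀ s : ℝ, HasDerivAt (fun t : ℝ => xh + t • e) e s := by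
    intro s
    simpa using (((hasDerivAt_id s).smul_const e).const_add xh)
  -- derivative step
  have hstep : ∀ k : ℕ, k < 3 → ∀ s : ℝ, HasDerivAt (φ k) (φ (k + 1) s) s := by
    intro k hk s
    have hc : ContDiff ℝ 1 (iteratedFDeriv ℝ k f) := by
      apply hf.iteratedFDeriv_right
      have hk' : (1 + k : ℕ) ≤ 3 := by omega
      exact_mod_cast hk'
    have h1 : HasDerivAt (fun t : ℝ => iteratedFDeriv ℝ k f (xh + t • e))
        (fderiv ℝ (iteratedFDeriv ℝ k f) (xh + s • e) e) s :=
      ((hc.differentiable one_ne_zero) (xh + s • e)).hasFDerivAt.comp_hasDerivAt s (hline s)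
    have h2 := (ContinuousMultilinearMap.apply ℝ (fun _ : Fin k => E) ℝ
      (fun _ => e)).hasFDerivAt.comp_hasDerivAt s h1
    have h3 : φ (k + 1) s =
        (ContinuousMultilinearMap.apply ℝ (fun _ : Fin k => E) ℝ (fun _ => e))
          (fderiv ℝ (iteratedFDeriv ℝ k f) (xh + s • e) e) := by
      simp only [hφ, ContinuousMultilinearMap.apply_apply,
        iteratedFDeriv_succ_apply_left]
      rfl
    rw [h3]
    exact h2
  -- continuity / integrability
  have hcont : ∀ k : ℕ, k ≤ 3 → Continuous (φ k) := by
    intro k hk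
    exact (ContinuousMultilinearMap.apply ℝ (fun _ : Fin k => E) ℝ
        (fun _ => e)).continuous.comp
      ((hf.continuous_iteratedFDeriv (by exact_mod_cast hk)).comp
        (continuous_const.add (continuous_id.smul continuous_const)))
  have hint : ∀ k : ℕ, k ≤ 3 → IntervalIntegrable (φ k) MeasureTheory.volume 0 1 :=
    fun k hk => (hcont k hk).intervalIntegrable 0 1
  -- FTC
  have hFTC : (∫ s in (0:ℝ)..1, φ 1 s) = φ 0 1 - φ 0 0 :=
    intervalIntegral.integral_eq_sub_of_hasDerivAt
      (fun x _ => hstep 0 (by norm_num) x) (hint 1 (by norm_num))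
  -- first integration by parts
  have hu1 : ∀ x ∈ Set.uIcc (0:ℝ) 1, HasDerivAt (fun s : ℝ => s * (s - 1))
      (2 * x - 1) x := by
    intro x _
    have := (hasDerivAt_id x).mul ((hasDerivAt_id x).sub_const 1)
    refine this.congr_deriv ?_
    simp only [id]
    ring
  have hu2 : ∀ x ∈ Set.uIcc (0:ℝ) 1, HasDerivAt (fun s : ℝ => 2 * s - 1)
      (2 : ℝ) x := by
    intro x _
    simpa using ((hasDerivAt_id x).const_mul (2:ℝ)).sub_const 1
  have hI1 : (∫ s in (0:ℝ)..1, (s * (s - 1)) * φ 3 s) =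
      - ∫ s in (0:ℝ)..1, (2 * s - 1) * φ 2 s := by
    have := intervalIntegral.integral_mul_deriv_eq_deriv_mul hu1
      (fun x _ => hstep 2 (by norm_num) x)
      ((by continuity : Continuous (fun s : ℝ => 2 * s - 1)).intervalIntegrable 0 1)
      (hint 3 (by norm_num))
    simpa using this
  have hI2 : (∫ s in (0:ℝ)..1, (2 * s - 1) * φ 2 s) =
      φ 1 1 + φ 1 0 - 2 * (φ 0 1 - φ 0 0) := by
    have := intervalIntegral.integral_mul_deriv_eq_deriv_mul hu2
      (fun x _ => hstep 1 (by norm_num) x)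
      ((continuous_const : Continuous (fun _ : ℝ => (2:ℝ))).intervalIntegrable 0 1)
      (hint 2 (by norm_num))
    rw [this]
    rw [intervalIntegral.integral_const_mul, hFTC]
    ring
  -- endpoint values
  have hx1 : xh + (1:ℝ) • e = xbar := by
    rw [one_smul, he]; abel
  have hx0 : xh + (0:ℝ) • e = xh := by simp
  have hφ01 : φ 0 1 = f xbar := by simp only [hφ, iteratedFDeriv_zero_apply, hx1]
  have hφ00 : φ 0 0 = f xh := by simp only [hφ, iteratedFDeriv_zero_apply, hx0]
  have hφ11 : φ 1 1 = 0 := by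
    simp only [hφ, iteratedFDeriv_one_apply, hx1, hstat]
    rfl
  have hφ10 : φ 1 0 = fderiv ℝ f xh (xbar - xh - yh) := by
    have h' : fderiv ℝ f xh (xbar - xh - yh) = fderiv ℝ f xh e := by
      rw [show xbar - xh - yh = e - yh from by rw [he], map_sub, hgal yh hyh, sub_zero]
    rw [h']
    simp only [hφ, iteratedFDeriv_one_apply, hx0]
  -- reconcile integrand order
  have hcomm : (∫ s in (0:ℝ)..1, φ 3 s * (s * (s - 1))) =
      ∫ s in (0:ℝ)..1, (s * (s - 1)) * φ 3 s := by
    congr 1; ext s; ring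
  have key : (∫ s in (0:ℝ)..1, φ 3 s * (s * (s - 1))) =
      - φ 1 1 - φ 1 0 + 2 * (φ 0 1 - φ 0 0) := by
    rw [hcomm, hI1, hI2]; ring
  show f xbar - f xh =
      1 / 2 * (fderiv ℝ f xh) (xbar - xh - yh) + 1 / 2 * ∫ s in (0:ℝ)..1, φ 3 s * (s * (s - 1))
  rw [key, hφ01, hφ00, hφ11, hφ10]
  ring
end

section
/- Let X be a real normed vector space, X_h ⊆ X a subspace, a : X → (X →L[ℝ] ℝ) a semilinear form (continuous linear in its second argument) that is three times continuously Fréchet differentiable in its first argument, F : X →L[ℝ] ℝ continuous linear, and J : X → ℝ three times continuously Fréchet differentiable. Suppose: (i) U ∈ X satisfies a(U)(Φ) = F(Φ) for all Φ ∈ X; (ii) Z ∈ X satisfies J′(U)(Φ) = a′(U)(Φ)(Z) for all Φ ∈ X; (iii) U_h ∈ X_h satisfies a(U_h)(Φ_h) = F(Φ_h) for all Φ_h ∈ X_h; (iv) Z_h ∈ X_h satisfies J′(U_h)(Φ_h) = a′(U_h)(Φ_h)(Z_h) for all Φ_h ∈ X_h. Set e := U − U_h and e* := Z − Z_h. Then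 for all Φ_h, Ψ_h ∈ X_h: J(U) − J(U_h) = (1/2)[F(Z − Φ_h) − a(U_h)(Z − Φ_h)] + (1/2)[J′(U_h)(U − Ψ_h) − a′(U_h)(U − Ψ_h)(Z_h)] + R_h^{(3)}, where the remainder is R_h^{(3)} = (1/2) ∫₀¹ [ J‴(U_h + s·e)(e, e, e) − a‴(U_h + s·e)(e, e, e)(Z_h + s·e*) − 3·a″(U_h + s·e)(e, e)(e*) ] · s(s−1) ds. -/
open intervalIntegral MeasureTheory

lemma dwr_line_deriv {E G : Type*} [NormedAddCommGroup E] [NormedSpace ℝ E]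
    [NormedAddCommGroup G] [NormedSpace ℝ G]
    {f : E → G} {n : ℕ} (hf : ContDiff ℝ n f) (k : ℕ) (hk : k < n) (x v : E) (t : ℝ) :
    HasDerivAt (fun s : ℝ => iteratedFDeriv ℝ k f (x + s • v) (fun _ => v))
      (iteratedFDeriv ℝ (k + 1) f (x + t • v) (fun _ => v)) t := by
  have hline : HasDerivAt (fun s : ℝ => x + s • v) v t := by
    simpa using ((hasDerivAt_id t).smul_const v).const_add x
  have hdiff : Differentiable ℝ (iteratedFDeriv ℝ k f) :=
    hf.differentiable_iteratedFDeriv (by exact_mod_cast hk)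
  have h1 : HasDerivAt (fun s : ℝ => iteratedFDeriv ℝ k f (x + s • v))
      (fderiv ℝ (iteratedFDeriv ℝ k f) (x + t • v) v) t :=
    (hdiff _).hasFDerivAt.comp_hasDerivAt t hline
  have h2 := ((ContinuousMultilinearMap.apply ℝ (fun _ : Fin k => E) G
      (fun _ => v)).hasFDerivAt).comp_hasDerivAt t h1
  have h3 : iteratedFDeriv ℝ (k + 1) f (x + t • v) (fun _ => v)
      = fderiv ℝ (iteratedFDeriv ℝ k f) (x + t • v) v (fun _ => v) := by
    rw [iteratedFDeriv_succ_apply_left]; rfl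
  rw [h3]; exact h2

lemma dwr_trapezoid {φ0 φ1 φ2 φ3 : ℝ → ℝ}
    (h0 : ∀ s, HasDerivAt φ0 (φ1 s) s) (h1 : ∀ s, HasDerivAt φ1 (φ2 s) s)
    (h2 : ∀ s, HasDerivAt φ2 (φ3 s) s) (h3 : Continuous φ3) :
    φ0 1 - φ0 0 = (φ1 0 + φ1 1) / 2 + (1 / 2) * ∫ s in (0:ℝ)..1, φ3 s * (s * (s - 1)) := by
  have c0 : Continuous φ0 := continuous_iff_continuousAt.2 fun s => (h0 s).continuousAt
  have c1 : Continuous φ1 := continuous_iff_continuousAt.2 fun s => (h1 s).continuousAt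
  have c2 : Continuous φ2 := continuous_iff_continuousAt.2 fun s => (h2 s).continuousAt
  have hu : ∀ s : ℝ, HasDerivAt (fun s : ℝ => s * (s - 1)) (2 * s - 1) s := by
    intro s
    have := (hasDerivAt_id s).mul ((hasDerivAt_id s).sub_const 1)
    refine this.congr_deriv ?_
    simp [id]
    ring
  have hw : ∀ s : ℝ, HasDerivAt (fun s : ℝ => 2 * s - 1) 2 s := by
    intro s
    simpa using ((hasDerivAt_id s).const_mul 2).sub_const 1
  have hcw : Continuous fun s : ℝ => 2 * s - 1 := by continuity
  have stepA : ∫ s in (0:ℝ)..1, (s * (s - 1)) * φ3 s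
      = (1 : ℝ) * (1 - 1) * φ2 1 - 0 * (0 - 1) * φ2 0
        - ∫ s in (0:ℝ)..1, (2 * s - 1) * φ2 s := by
    exact intervalIntegral.integral_mul_deriv_eq_deriv_mul_of_hasDerivAt
      (by fun_prop) (c2.continuousOn) (fun x _ => hu x) (fun x _ => h2 x)
      (hcw.intervalIntegrable 0 1) (h3.intervalIntegrable 0 1)
  have stepB : ∫ s in (0:ℝ)..1, (2 * s - 1) * φ2 s
      = (2 * 1 - 1) * φ1 1 - (2 * 0 - 1) * φ1 0 - ∫ s in (0:ℝ)..1, 2 * φ1 s := by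
    exact intervalIntegral.integral_mul_deriv_eq_deriv_mul_of_hasDerivAt
      (hcw.continuousOn) (c1.continuousOn) (fun x _ => hw x) (fun x _ => h1 x)
      ((continuous_const : Continuous fun _ : ℝ => (2:ℝ)).intervalIntegrable 0 1)
      (c2.intervalIntegrable 0 1)
  have stepC : ∫ s in (0:ℝ)..1, φ1 s = φ0 1 - φ0 0 :=
    intervalIntegral.integral_eq_sub_of_hasDerivAt (fun x _ => h0 x)
      (c1.intervalIntegrable 0 1)
  have stepD : ∫ s in (0:ℝ)..1, 2 * φ1 s = 2 * ∫ s in (0:ℝ)..1, φ1 s :=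
    intervalIntegral.integral_const_mul 2 φ1
  have hcomm : ∫ s in (0:ℝ)..1, φ3 s * (s * (s - 1))
      = ∫ s in (0:ℝ)..1, (s * (s - 1)) * φ3 s := by
    refine intervalIntegral.integral_congr fun s _ => ?_
    ring
  rw [hcomm, stepA, stepB, stepD, stepC]
  ring

/-- Dual-weighted residual error identity (Becker–Rannacher): under the
continuous/discrete primal and adjoint equations, for all `Φ_h, Ψ_h ∈ X_h`,
`J(U) − J(U_h) = (1/2) ρ(U_h)(Z − Φ_h) + (1/2) ρ*(U_h,Z_h)(U − Ψ_h) + R_h⁽³⁾`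
with the cubic remainder
`R_h⁽³⁾ = (1/2) ∫₀¹ [J‴(U_h+s e)(e,e,e) − a‴(U_h+s e)(e,e,e)(Z_h+s e*)
  − 3 a″(U_h+s e)(e,e)(e*)] s(s−1) ds`, where `e = U − U_h`, `e* = Z − Z_h`. -/
theorem dwr_error_identity
    {X : Type*} [NormedAddCommGroup X] [NormedSpace ℝ X]
    (Xh : Submodule ℝ X)
    (a : X → (X →L[ℝ] ℝ)) (ha : ContDiff ℝ 3 a)
    (F : X →L[ℝ] ℝ) (J : X → ℝ) (hJ : ContDiff ℝ 3 J)
    (U : X) (hU : ∀ Φ : X, a U Φ = F Φ)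
    (Z : X) (hZ : ∀ Φ : X, fderiv ℝ J U Φ = fderiv ℝ a U Φ Z)
    (Uh : X) (hUhmem : Uh ∈ Xh) (hUh : ∀ Φh ∈ Xh, a Uh Φh = F Φh)
    (Zh : X) (hZhmem : Zh ∈ Xh)
    (hZh : ∀ Φh ∈ Xh, fderiv ℝ J Uh Φh = fderiv ℝ a Uh Φh Zh) :
    ∀ Φh ∈ Xh, ∀ Ψh ∈ Xh,
      J U - J Uh =
        (1 / 2) * (F (Z - Φh) - a Uh (Z - Φh)) +
        (1 / 2) * (fderiv ℝ J Uh (U - Ψh) - fderiv ℝ a Uh (U - Ψh) Zh) +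
        (1 / 2) * ∫ s in (0 : ℝ)..1,
          (iteratedFDeriv ℝ 3 J (Uh + s • (U - Uh)) (fun _ => U - Uh)
            - iteratedFDeriv ℝ 3 a (Uh + s • (U - Uh)) (fun _ => U - Uh)
                (Zh + s • (Z - Zh))
            - 3 * iteratedFDeriv ℝ 2 a (Uh + s • (U - Uh)) (fun _ => U - Uh)
                (Z - Zh)) * (s * (s - 1)) := by
  intro Φh hΦh Ψh hΨh
  set e : X := U - Uh with he
  set es : X := Z - Zh with hes
  -- line functions
  have hβ : ∀ s : ℝ, HasDerivAt (fun s : ℝ => Zh + s • es) es s := fun s => by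
    simpa using ((hasDerivAt_id s).smul_const es).const_add Zh
  -- the four scalar functions
  set φ0 : ℝ → ℝ := fun s =>
    J (Uh + s • e) + (F (Zh + s • es) - a (Uh + s • e) (Zh + s • es)) with hφ0
  set φ1 : ℝ → ℝ := fun s =>
    iteratedFDeriv ℝ 1 J (Uh + s • e) (fun _ => e) + F es
      - iteratedFDeriv ℝ 1 a (Uh + s • e) (fun _ => e) (Zh + s • es)
      - a (Uh + s • e) es with hφ1
  set φ2 : ℝ → ℝ := fun s =>
    iteratedFDeriv ℝ 2 J (Uh + s • e) (fun _ => e)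
      - iteratedFDeriv ℝ 2 a (Uh + s • e) (fun _ => e) (Zh + s • es)
      - 2 * iteratedFDeriv ℝ 1 a (Uh + s • e) (fun _ => e) es with hφ2
  set φ3 : ℝ → ℝ := fun s =>
    iteratedFDeriv ℝ 3 J (Uh + s • e) (fun _ => e)
      - iteratedFDeriv ℝ 3 a (Uh + s • e) (fun _ => e) (Zh + s • es)
      - 3 * iteratedFDeriv ℝ 2 a (Uh + s • e) (fun _ => e) es with hφ3
  have hJ0 : ∀ s : ℝ, HasDerivAt (fun s : ℝ => J (Uh + s • e))
      (iteratedFDeriv ℝ 1 J (Uh + s • e) (fun _ => e)) s := fun s => by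
    have := dwr_line_deriv (n := 3) hJ 0 (by norm_num) Uh e s
    simpa [iteratedFDeriv_zero_apply] using this
  have ha0 : ∀ s : ℝ, HasDerivAt (fun s : ℝ => a (Uh + s • e))
      (iteratedFDeriv ℝ 1 a (Uh + s • e) (fun _ => e)) s := fun s => by
    have := dwr_line_deriv (n := 3) ha 0 (by norm_num) Uh e s
    simpa [iteratedFDeriv_zero_apply] using this
  have h0 : ∀ s, HasDerivAt φ0 (φ1 s) s := by
    intro s
    have hF : HasDerivAt (fun s : ℝ => F (Zh + s • es)) (F es) s :=
      F.hasFDerivAt.comp_hasDerivAt s (hβ s)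
    have hav : HasDerivAt (fun s : ℝ => a (Uh + s • e) (Zh + s • es))
        (iteratedFDeriv ℝ 1 a (Uh + s • e) (fun _ => e) (Zh + s • es)
          + a (Uh + s • e) es) s := (ha0 s).clm_apply (hβ s)
    have := (hJ0 s).add (hF.sub hav)
    rw [hφ0, hφ1]
    refine this.congr_deriv ?_
    ring
  have h1 : ∀ s, HasDerivAt φ1 (φ2 s) s := by
    intro s
    have hJ1 := dwr_line_deriv (n := 3) hJ 1 (by norm_num) Uh e s
    have ha1 := dwr_line_deriv (n := 3) ha 1 (by norm_num) Uh e s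
    have hP1 : HasDerivAt
        (fun s : ℝ => iteratedFDeriv ℝ 1 a (Uh + s • e) (fun _ => e) (Zh + s • es))
        (iteratedFDeriv ℝ 2 a (Uh + s • e) (fun _ => e) (Zh + s • es)
          + iteratedFDeriv ℝ 1 a (Uh + s • e) (fun _ => e) es) s :=
      ha1.clm_apply (hβ s)
    have hP2 : HasDerivAt (fun s : ℝ => a (Uh + s • e) es)
        (iteratedFDeriv ℝ 1 a (Uh + s • e) (fun _ => e) es + a (Uh + s • e) 0) s :=
      (ha0 s).clm_apply (hasDerivAt_const s es)
    have := ((hJ1.add (hasDerivAt_const s (F es))).sub hP1).sub hP2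
    rw [hφ1, hφ2]
    refine this.congr_deriv ?_
    simp
    ring
  have h2 : ∀ s, HasDerivAt φ2 (φ3 s) s := by
    intro s
    have hJ2 := dwr_line_deriv (n := 3) hJ 2 (by norm_num) Uh e s
    have ha2 := dwr_line_deriv (n := 3) ha 2 (by norm_num) Uh e s
    have ha1 := dwr_line_deriv (n := 3) ha 1 (by norm_num) Uh e s
    have hP1 : HasDerivAt
        (fun s : ℝ => iteratedFDeriv ℝ 2 a (Uh + s • e) (fun _ => e) (Zh + s • es))
        (iteratedFDeriv ℝ 3 a (Uh + s • e) (fun _ => e) (Zh + s • es)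
          + iteratedFDeriv ℝ 2 a (Uh + s • e) (fun _ => e) es) s :=
      ha2.clm_apply (hβ s)
    have hP2 : HasDerivAt
        (fun s : ℝ => 2 * (iteratedFDeriv ℝ 1 a (Uh + s • e) (fun _ => e) es))
        (2 * (iteratedFDeriv ℝ 2 a (Uh + s • e) (fun _ => e) es
          + iteratedFDeriv ℝ 1 a (Uh + s • e) (fun _ => e) 0)) s :=
      (ha1.clm_apply (hasDerivAt_const s es)).const_mul 2
    have := (hJ2.sub hP1).sub hP2
    rw [hφ2, hφ3]
    refine this.congr_deriv ?_
    simp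
    ring
  have hγc : Continuous fun s : ℝ => Uh + s • e := by fun_prop
  have hβc : Continuous fun s : ℝ => Zh + s • es := by fun_prop
  have h3 : Continuous φ3 := by
    rw [hφ3]
    have cJ3 : Continuous fun s : ℝ => iteratedFDeriv ℝ 3 J (Uh + s • e) (fun _ => e) :=
      (ContinuousMultilinearMap.apply ℝ (fun _ : Fin 3 => X) ℝ
        (fun _ => e)).continuous.comp ((hJ.continuous_iteratedFDeriv le_rfl).comp hγc)
    have ca3 : Continuous fun s : ℝ => iteratedFDeriv ℝ 3 a (Uh + s • e) (fun _ => e) :=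
      (ContinuousMultilinearMap.apply ℝ (fun _ : Fin 3 => X) (X →L[ℝ] ℝ)
        (fun _ => e)).continuous.comp ((ha.continuous_iteratedFDeriv le_rfl).comp hγc)
    have ca2 : Continuous fun s : ℝ => iteratedFDeriv ℝ 2 a (Uh + s • e) (fun _ => e) :=
      (ContinuousMultilinearMap.apply ℝ (fun _ : Fin 2 => X) (X →L[ℝ] ℝ)
        (fun _ => e)).continuous.comp
        ((ha.continuous_iteratedFDeriv (by norm_num)).comp hγc)
    exact (cJ3.sub (ca3.clm_apply hβc)).sub
      (continuous_const.mul (ca2.clm_apply continuous_const))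
  have htr := dwr_trapezoid h0 h1 h2 h3
  -- endpoint values
  have e1 : Uh + (1:ℝ) • e = U := by rw [he]; simp
  have e0 : Uh + (0:ℝ) • e = Uh := by simp
  have b1 : Zh + (1:ℝ) • es = Z := by rw [hes]; simp
  have b0 : Zh + (0:ℝ) • es = Zh := by simp
  have hφ0_1 : φ0 1 = J U := by rw [hφ0]; simp only [e1, b1, hU Z]; ring
  have hφ0_0 : φ0 0 = J Uh := by
    rw [hφ0]; simp only [e0, b0, hUh Zh hZhmem]; ring
  have hφ1_1 : φ1 1 = 0 := by
    rw [hφ1]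
    simp only [e1, b1, iteratedFDeriv_one_apply]
    rw [← hZ e, hU es]
    ring
  have hφ1_0 : φ1 0 = (F (Z - Φh) - a Uh (Z - Φh))
      + (fderiv ℝ J Uh (U - Ψh) - fderiv ℝ a Uh (U - Ψh) Zh) := by
    rw [hφ1]
    simp only [e0, b0, iteratedFDeriv_one_apply]
    have horth1 : a Uh (Φh - Zh) = F (Φh - Zh) := hUh _ (Submodule.sub_mem _ hΦh hZhmem)
    have horth2 : fderiv ℝ J Uh (Ψh - Uh) = fderiv ℝ a Uh (Ψh - Uh) Zh :=
      hZh _ (Submodule.sub_mem _ hΨh hUhmem)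
    rw [he, hes]
    simp only [map_sub, ContinuousLinearMap.sub_apply] at horth1 horth2 ⊢
    linarith
  rw [hφ0_1, hφ0_0, hφ1_1, hφ1_0] at htr
  rw [htr]
  simp only [hφ3]
  ring
end

section
/- Let X be a real normed vector space, X_h ⊆ X a subspace, a : X → (X →L[ℝ] ℝ) a semilinear form (continuous linear in its second argument) that is twice continuously Fréchet differentiable in its first argument, F : X →L[ℝ] ℝ continuous linear, and J : X → ℝ twice continuously Fréchet differentiable. Suppose: (i) U ∈ X satisfies a(U)(Φ) = F(Φ) for all Φ ∈ X; (ii) Z ∈ X satisfies J′(U)(Φ) = a′(U)(Φ)(Z) for all Φ ∈ X; (iii) U_h ∈ X_h satisfies a(U_h)(Φ_h) = F(Φ_h) for all Φ_h ∈ X_h. Set e := U − U_h. Then for every Φ_h ∈ X_h: J(U) − J(U_h) = [F(Z − Φ_h) − a(U_h)(Z − Φ_h)] + R_h^{(2)}, where R_h^{(2)} = − ∫₀¹ s·[ J″(U_h + s·e)(e, e) − a″(U_h + s·e)(e, e)(Z) ] ds. -/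
/-- Primal DWR error identity: under the continuous primal, continuous adjoint,
and discrete primal equations, for every `Φ_h ∈ X_h`,
`J(U) − J(U_h) = [F(Z − Φ_h) − a(U_h)(Z − Φ_h)] + R_h⁽²⁾` with quadratic
remainder `R_h⁽²⁾ = −∫₀¹ s·[J″(U_h+s e)(e,e) − a″(U_h+s e)(e,e)(Z)] ds`,
where `e = U − U_h`. -/
theorem dwr_primal_error_identity
    {X : Type*} [NormedAddCommGroup X] [NormedSpace ℝ X]
    (Xh : Submodule ℝ X)
    (a : X → (X →L[ℝ] ℝ)) (ha : ContDiff ℝ 2 a)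
    (F : X →L[ℝ] ℝ) (J : X → ℝ) (hJ : ContDiff ℝ 2 J)
    (U : X) (hU : ∀ Φ : X, a U Φ = F Φ)
    (Z : X) (hZ : ∀ Φ : X, fderiv ℝ J U Φ = fderiv ℝ a U Φ Z)
    (Uh : X) (hUhmem : Uh ∈ Xh) (hUh : ∀ Φh ∈ Xh, a Uh Φh = F Φh) :
    ∀ Φh ∈ Xh,
      J U - J Uh =
        (F (Z - Φh) - a Uh (Z - Φh)) +
        (- ∫ s in (0 : ℝ)..1,
            s * (iteratedFDeriv ℝ 2 J (Uh + s • (U - Uh)) (fun _ => U - Uh)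
              - iteratedFDeriv ℝ 2 a (Uh + s • (U - Uh)) (fun _ => U - Uh) Z)) := by
  intro Φh hΦh
  set e : X := U - Uh with he
  set γ : ℝ → X := fun s => Uh + s • e with hγ
  have hγd : ∀ s : ℝ, HasDerivAt γ e s := by
    intro s
    simpa [hγ] using ((hasDerivAt_id s).smul_const e).const_add Uh
  have hγc : Continuous γ := by continuity
  have hγ1 : γ 1 = U := by simp [hγ, he]
  have hγ0 : γ 0 = Uh := by simp [hγ]
  -- first and second derivatives along the line
  set D1 : ℝ → ℝ := fun s => fderiv ℝ J (γ s) e - fderiv ℝ a (γ s) e Z with hD1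
  set D2 : ℝ → ℝ := fun s =>
      iteratedFDeriv ℝ 2 J (γ s) (fun _ => e) -
        iteratedFDeriv ℝ 2 a (γ s) (fun _ => e) Z with hD2
  have hJd : Differentiable ℝ J := hJ.differentiable (by norm_num)
  have had : Differentiable ℝ a := ha.differentiable (by norm_num)
  have hJ' : ContDiff ℝ 1 (fderiv ℝ J) := hJ.fderiv_right (by norm_num)
  have ha' : ContDiff ℝ 1 (fderiv ℝ a) := ha.fderiv_right (by norm_num)
  -- f s = J (γ s) - a (γ s) Z  has derivative D1 s
  have hf : ∀ s : ℝ, HasDerivAt (fun s => J (γ s) - a (γ s) Z) (D1 s) s := by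
    intro s
    have h1 : HasDerivAt (fun s => J (γ s)) (fderiv ℝ J (γ s) e) s :=
      (hJd (γ s)).hasFDerivAt.comp_hasDerivAt s (hγd s)
    have h2 : HasDerivAt (fun s => a (γ s) Z) (fderiv ℝ a (γ s) e Z) s := by
      have := ((ContinuousLinearMap.apply ℝ ℝ Z).hasFDerivAt.comp (γ s)
          (had (γ s)).hasFDerivAt).comp_hasDerivAt s (hγd s)
      exact this.congr_deriv (by simp)
    exact h1.sub h2
  -- D1 has derivative D2
  have hD1d : ∀ s : ℝ, HasDerivAt D1 (D2 s) s := by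
    intro s
    have h1 : HasDerivAt (fun s => fderiv ℝ J (γ s) e)
        (fderiv ℝ (fderiv ℝ J) (γ s) e e) s := by
      have := ((ContinuousLinearMap.apply ℝ ℝ e).hasFDerivAt.comp (γ s)
          ((hJ'.differentiable (by norm_num)) (γ s)).hasFDerivAt).comp_hasDerivAt s (hγd s)
      exact this.congr_deriv (by simp)
    have h2 : HasDerivAt (fun s => fderiv ℝ a (γ s) e Z)
        (fderiv ℝ (fderiv ℝ a) (γ s) e e Z) s := by
      have := (((ContinuousLinearMap.apply ℝ ℝ Z).comp
          (ContinuousLinearMap.apply ℝ (X →L[ℝ] ℝ) e)).hasFDerivAt.comp (γ s)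
          ((ha'.differentiable (by norm_num)) (γ s)).hasFDerivAt).comp_hasDerivAt s (hγd s)
      exact this.congr_deriv (by simp)
    have := h1.sub h2
    exact this.congr_deriv (by simp [hD2, iteratedFDeriv_two_apply])
  -- continuity of D1 and D2
  have hD1c : Continuous D1 := by
    have c1 : Continuous (fderiv ℝ J) := hJ.continuous_fderiv (by norm_num)
    have c2 : Continuous (fderiv ℝ a) := ha.continuous_fderiv (by norm_num)
    exact ((ContinuousLinearMap.apply ℝ ℝ e).continuous.comp (c1.comp hγc)).sub
      ((ContinuousLinearMap.apply ℝ ℝ Z).continuous.comp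
        (((ContinuousLinearMap.apply ℝ (X →L[ℝ] ℝ) e).continuous.comp
          (c2.comp hγc))))
  have hD2c : Continuous D2 := by
    have hrw : D2 = fun s => fderiv ℝ (fderiv ℝ J) (γ s) e e -
        fderiv ℝ (fderiv ℝ a) (γ s) e e Z := by
      funext s; simp [hD2, iteratedFDeriv_two_apply]
    have c1 : Continuous (fderiv ℝ (fderiv ℝ J)) := hJ'.continuous_fderiv (by norm_num)
    have c2 := ha'.continuous_fderiv (by norm_num)
    have e1 : Continuous (fun s => fderiv ℝ (fderiv ℝ J) (γ s) e e) :=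
      (ContinuousLinearMap.apply ℝ ℝ e).continuous.comp
        ((ContinuousLinearMap.apply ℝ (X →L[ℝ] ℝ) e).continuous.comp (c1.comp hγc))
    have e2 : Continuous (fun s => fderiv ℝ (fderiv ℝ a) (γ s) e e Z) :=
      (ContinuousLinearMap.apply ℝ ℝ Z).continuous.comp
        ((ContinuousLinearMap.apply ℝ (X →L[ℝ] ℝ) e).continuous.comp
          ((ContinuousLinearMap.apply ℝ (X →L[ℝ] (X →L[ℝ] ℝ)) e).continuous.comp
            (c2.comp hγc)))
    rw [hrw]; exact e1.sub e2
  -- fundamental theorem of calculus applications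
  have hint1 : ∫ s in (0:ℝ)..1, D1 s =
      (J (γ 1) - a (γ 1) Z) - (J (γ 0) - a (γ 0) Z) :=
    intervalIntegral.integral_eq_sub_of_hasDerivAt (fun s _ => hf s)
      (hD1c.intervalIntegrable 0 1)
  have hint2 : ∫ s in (0:ℝ)..1, (D1 s + s * D2 s) = D1 1 := by
    have h : ∀ s ∈ Set.uIcc (0:ℝ) 1, HasDerivAt (fun s => s * D1 s)
        (D1 s + s * D2 s) s := fun s _ => by
      exact ((hasDerivAt_id s).mul (hD1d s)).congr_deriv (by simp [add_comm])
    have := intervalIntegral.integral_eq_sub_of_hasDerivAt h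
      ((hD1c.add (continuous_id.mul hD2c)).intervalIntegrable 0 1)
    simpa using this
  have hintadd : ∫ s in (0:ℝ)..1, (D1 s + s * D2 s) =
      (∫ s in (0:ℝ)..1, D1 s) + ∫ s in (0:ℝ)..1, s * D2 s :=
    intervalIntegral.integral_add (hD1c.intervalIntegrable 0 1)
      ((continuous_id.mul hD2c).intervalIntegrable 0 1)
  have hD11 : D1 1 = 0 := by
    simp [hD1, hγ1, hZ e]
  have hkey : ∫ s in (0:ℝ)..1, s * D2 s =
      - ((J U - a U Z) - (J Uh - a Uh Z)) := by
    have := hintadd.symm.trans hint2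
    rw [hint1, hγ1, hγ0, hD11] at this
    linarith
  have hintrw : (∫ s in (0:ℝ)..1,
      s * (iteratedFDeriv ℝ 2 J (Uh + s • (U - Uh)) (fun _ => U - Uh)
        - iteratedFDeriv ℝ 2 a (Uh + s • (U - Uh)) (fun _ => U - Uh) Z)) =
      ∫ s in (0:ℝ)..1, s * D2 s := by
    rfl
  rw [hintrw, hkey]
  have h1 : F (Z - Φh) = a U Z - a Uh Φh := by
    rw [map_sub, ← hU Z, ← hUh Φh hΦh]
  have h2 : a Uh (Z - Φh) = a Uh Z - a Uh Φh := map_sub _ _ _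
  rw [h1, h2]
  ring
end
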